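/- arXiv:1602.00836 — 2 statements merged into one kernel-verified Lean document; each statement's English description precedes it below -/
import Mathlib

section
/- Let R be an n×m matrix over K[x] that is row reduced with rows of degrees d_1,...,d_n. Then for any nonzero vector v = (v_1,...,v_n) over K[x], the degree of the row vector v·R equals max over i with v_i ≠ 0 of (deg v_i + d_i). (Predictable degree property.) -/
open Polynomial Matrix Classical

noncomputable section

/-- Degree of row `i` of a polynomial matrix: max of the natural degrees of its entries. -/
noncomputable def rowDegNat {K : Type*} [Field K] {n m : ℕ}
    (A : Matrix (Fin n) (Fin m) K[X]) (i : Fin n) : ℕ :=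
  Finset.univ.sup fun j => (A i j).natDegree

/-- Row-wise leading coefficient matrix. -/
noncomputable def leadingMatrix {K : Type*} [Field K] {n m : ℕ}
    (A : Matrix (Fin n) (Fin m) K[X]) : Matrix (Fin n) (Fin m) K :=
  Matrix.of fun i j => (A i j).coeff (rowDegNat A i)

/-! With `D = max (deg vᵢ + dᵢ)`, the coefficient of `x ^ D` in `v ⬝ R` is `c ⬝ LM(R)`, where
`cᵢ` is the coefficient of `x ^ (D - dᵢ)` in `vᵢ`. At an index realising the maximum, `cᵢ` is the
leading coefficient of `vᵢ`, so `c ≠ 0`; as the rows of `LM(R)` are independent, `c ⬝ LM(R) ≠ 0`,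
and `v ⬝ R` has degree at least `D`. The bound `≤ D` is entrywise. -/

theorem Polynomial.coeff_mul_of_natDegree_add_le {S : Type*} [Semiring S] {p q : S[X]}
    {e D : ℕ} (hq : q.natDegree ≤ e) (hpD : p.natDegree + e ≤ D) :
    (p * q).coeff D = p.coeff (D - e) * q.coeff e := by
  have h := coeff_mul_add_eq_of_natDegree_le (f := p) (df := D - e) (by omega) hq
  rwa [Nat.sub_add_cancel (by omega)] at h

section

variable {K : Type*} [Field K] {n m : ℕ} (R : Matrix (Fin n) (Fin m) K[X]) (v : Fin n → K[X])

theorem natDegree_le_rowDegNat (i : Fin n) (j : Fin m) : (R i j).natDegree ≤ rowDegNat R i :=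
  Finset.le_sup (f := fun j => (R i j).natDegree) (Finset.mem_univ j)

theorem leadingMatrix_apply (i : Fin n) (j : Fin m) :
    leadingMatrix R i j = (R i j).coeff (rowDegNat R i) :=
  rfl

theorem degree_vecMul_apply_le (j : Fin m) :
    ((v ᵥ* R) j).degree ≤ (Finset.univ.filter fun i => v i ≠ 0).sup
      fun i => (((v i).natDegree + rowDegNat R i : ℕ) : WithBot ℕ) := by
  refine (degree_sum_le Finset.univ fun i => v i * R i j).trans (Finset.sup_le fun i _ => ?_)
  by_cases hvi : v i = 0
  · simp [hvi]
  refine (degree_le_of_natDegree_le ?_).trans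
    (Finset.le_sup (f := fun i => (((v i).natDegree + rowDegNat R i : ℕ) : WithBot ℕ))
      (by simpa using hvi))
  exact natDegree_mul_le.trans (Nat.add_le_add_left (natDegree_le_rowDegNat R i j) _)

theorem coeff_vecMul_eq_vecMul_leadingMatrix {D : ℕ}
    (hD : ∀ i, v i ≠ 0 → (v i).natDegree + rowDegNat R i ≤ D) (j : Fin m) :
    ((v ᵥ* R) j).coeff D = ((fun i => (v i).coeff (D - rowDegNat R i)) ᵥ* leadingMatrix R) j := by
  simp only [vecMul, dotProduct, finsetSum_coeff, leadingMatrix_apply]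
  refine Finset.sum_congr rfl fun i _ => ?_
  by_cases hvi : v i = 0
  · simp [hvi]
  exact coeff_mul_of_natDegree_add_le (natDegree_le_rowDegNat R i j) (hD i hvi)

theorem exists_coeff_vecMul_ne_zero (hred : LinearIndependent K (leadingMatrix R).row)
    {i₀ : Fin n} (hi₀ : v i₀ ≠ 0)
    (hmax : ∀ i, v i ≠ 0 →
      (v i).natDegree + rowDegNat R i ≤ (v i₀).natDegree + rowDegNat R i₀) :
    ∃ j, ((v ᵥ* R) j).coeff ((v i₀).natDegree + rowDegNat R i₀) ≠ 0 := by
  set c : Fin n → K := fun i => (v i).coeff ((v i₀).natDegree + rowDegNat R i₀ - rowDegNat R i)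
  have hc : c ≠ 0 := fun h => by
    have hci₀ : c i₀ = (v i₀).leadingCoeff := by simp [c]
    exact hi₀ (leadingCoeff_eq_zero.mp (hci₀ ▸ congr_fun h i₀))
  have hcLM : c ᵥ* leadingMatrix R ≠ 0 := fun h =>
    hc (vecMul_injective_iff.mpr hred (h.trans (zero_vecMul _).symm))
  obtain ⟨j, hj⟩ := Function.ne_iff.mp hcLM
  exact ⟨j, by rwa [coeff_vecMul_eq_vecMul_leadingMatrix R v hmax]⟩

end

theorem stmt2_general {K : Type*} [Field K] {n m : ℕ} (R : Matrix (Fin n) (Fin m) K[X])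
    (hred : LinearIndependent K (fun i => leadingMatrix R i))
    (v : Fin n → K[X]) :
    (Finset.univ.sup fun j => ((v ᵥ* R) j).degree) =
      (Finset.univ.filter fun i => v i ≠ 0).sup
        (fun i => (((v i).natDegree + rowDegNat R i : ℕ) : WithBot ℕ)) := by
  refine le_antisymm (Finset.sup_le fun j _ => degree_vecMul_apply_le R v j) ?_
  obtain hS | hS := (Finset.univ.filter fun i => v i ≠ 0).eq_empty_or_nonempty
  · simp [hS]
  obtain ⟨i₀, hi₀, hmax⟩ :=
    Finset.exists_max_image _ (fun i => (v i).natDegree + rowDegNat R i) hS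
  simp only [Finset.mem_filter, Finset.mem_univ, true_and] at hi₀ hmax
  obtain ⟨j, hj⟩ := exists_coeff_vecMul_ne_zero R v hred hi₀ hmax
  refine Finset.sup_le fun i hi => ?_
  calc (((v i).natDegree + rowDegNat R i : ℕ) : WithBot ℕ)
      ≤ (((v i₀).natDegree + rowDegNat R i₀ : ℕ) : WithBot ℕ) := by
        exact_mod_cast hmax i (by simpa using hi)
    _ ≤ ((v ᵥ* R) j).degree := le_degree_of_ne_zero hj
    _ ≤ _ := Finset.le_sup (f := fun j => ((v ᵥ* R) j).degree) (Finset.mem_univ j)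

/-- Predictable degree property: if `R` is row reduced (rows of its leading matrix are
linearly independent over `K`, hence `R` has full row rank), then for any nonzero vector
`v`, the degree of `v·R` is `max_{i : v_i ≠ 0} (deg v_i + d_i)` where `d_i` is the degree
of row `i` of `R`. -/
theorem stmt2 {K : Type*} [Field K] {n m : ℕ} (R : Matrix (Fin n) (Fin m) K[X])
    (hred : LinearIndependent K (fun i => leadingMatrix R i))
    (v : Fin n → K[X]) (hv : v ≠ 0) :
    (Finset.univ.sup fun j => ((v ᵥ* R) j).degree) =
      (Finset.univ.filter fun i => v i ≠ 0).sup
        (fun i => (((v i).natDegree + rowDegNat R i : ℕ) : WithBot ℕ)) :=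
  stmt2_general R hred v
end
end

section
/- Let A be an s-row reduced nonsingular n×n matrix over K[x] with s-row degrees η = (η_1,...,η_n). Then adj(A)^T is (-s)-row reduced, and the (-s)-row degree of the i-th row of adj(A)^T is η - s - η_i, where η = Σ_j η_j and s = Σ_j s_j. -/
open Polynomial Matrix

noncomputable section

/-- Degree of a polynomial as an element of `WithBot ℤ`. -/
def zdeg {K : Type*} [Field K] (p : K[X]) : WithBot ℤ :=
  p.degree.map fun a : ℕ => (a : ℤ)

/-- The `s`-degree of a row vector `w`: `max_j (deg w_j + s_j)`. -/
def sdeg {K : Type*} [Field K] {m : ℕ} (s : Fin m → ℤ) (w : Fin m → K[X]) : WithBot ℤ :=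
  Finset.univ.sup fun j => zdeg (w j) + (s j : WithBot ℤ)

/-- The `s`-leading matrix of `A`, given its `s`-row degrees `ds`: entry `(i,j)` is the
coefficient of `A i j` at `ds i - s j` (or `0` when that index is negative). -/
def sLeadingMatrix {K : Type*} [Field K] {n m : ℕ} (s : Fin m → ℤ)
    (A : Matrix (Fin n) (Fin m) K[X]) (ds : Fin n → ℤ) : Matrix (Fin n) (Fin m) K :=
  Matrix.of fun i j => if ds i - s j < 0 then (0 : K) else (A i j).coeff (ds i - s j).toNat

/-!
The `(i, j)` entry of `adj(A)ᵀ` is `det A⁽ⁱʲ⁾`, where `A⁽ⁱʲ⁾` is `A` with row `i` replaced by the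
unit vector `e_j`. Expanding over permutations, a matrix whose rows have `s`-degrees at most `δ`
has determinant of degree at most `Σ δ - Σ s`, and its coefficient in that degree is the
determinant of the `s`-leading matrix. The rows of `A⁽ⁱʲ⁾` have `s`-degrees at most `η` with `η_i`
replaced by `s_j`, so the `(i, j)` entry of `adj(A)ᵀ` has degree at most `Σ η - Σ s - η_i + s_j`,
with coefficient there the `(i, j)` entry of `adj(LM_s A)ᵀ`. Hence
`LM_{-s}(adj(A)ᵀ) = adj(LM_s A)ᵀ`, whose determinant `det(LM_s A)^(n-1)` is nonzero; a
nonsingular leading matrix has no zero row, so every row degree bound is attained.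
-/

def coeffZ {R : Type*} [Semiring R] (e : ℤ) : R[X] →ₗ[R] R :=
  if e < 0 then 0 else lcoeff R e.toNat

section coeffZ

variable {R : Type*} [Semiring R] {e : ℤ} {p : R[X]}

lemma coeffZ_of_neg (he : e < 0) : coeffZ e p = 0 := by
  simp [coeffZ, he]

lemma coeffZ_of_nonneg (he : 0 ≤ e) : coeffZ e p = p.coeff e.toNat := by
  simp [coeffZ, not_lt.mpr he]

lemma coeffZ_eq_ite : coeffZ e p = if e < 0 then 0 else p.coeff e.toNat := by
  split_ifs with he
  · exact coeffZ_of_neg he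
  · exact coeffZ_of_nonneg (not_lt.mp he)

end coeffZ

section zdeg

variable {K : Type*} [Field K] {p q : K[X]} {a b e : ℤ}

@[simp]
lemma zdeg_zero : zdeg (0 : K[X]) = ⊥ := by
  simp [zdeg]

lemma zdeg_eq_natDegree (hp : p ≠ 0) : zdeg p = ((p.natDegree : ℤ) : WithBot ℤ) := by
  rw [zdeg, degree_eq_natDegree hp]
  rfl

lemma zdeg_le_iff_coeff_eq_zero : zdeg p ≤ a ↔ ∀ m : ℕ, a < m → p.coeff m = 0 := by
  rcases eq_or_ne p 0 with rfl | hp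
  · simp
  rw [zdeg_eq_natDegree hp, WithBot.coe_le_coe]
  constructor
  · intro h m hm
    exact coeff_eq_zero_of_natDegree_lt (by omega)
  · intro h
    by_contra! ha
    exact hp (leadingCoeff_eq_zero.mp (h _ ha))

lemma eq_zero_of_zdeg_le_of_neg (hp : zdeg p ≤ a) (ha : a < 0) : p = 0 :=
  ext fun m => zdeg_le_iff_coeff_eq_zero.mp hp m (by omega)

lemma natDegree_le_toNat_of_zdeg_le (hp : zdeg p ≤ a) : p.natDegree ≤ a.toNat :=
  natDegree_le_iff_coeff_eq_zero.mpr fun m hm =>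
    zdeg_le_iff_coeff_eq_zero.mp hp m (by omega)

lemma le_zdeg_of_coeffZ_ne_zero (h : coeffZ e p ≠ 0) : (e : WithBot ℤ) ≤ zdeg p := by
  rcases lt_or_ge e 0 with he | he
  · exact absurd (coeffZ_of_neg he) h
  rw [coeffZ_of_nonneg he] at h
  rw [zdeg_eq_natDegree (fun hp => h (by simp [hp])), WithBot.coe_le_coe]
  have := le_natDegree_of_ne_zero h
  omega

lemma zdeg_mul_le (hp : zdeg p ≤ a) (hq : zdeg q ≤ b) :
    zdeg (p * q) ≤ ((a + b : ℤ) : WithBot ℤ) := by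
  rcases eq_or_ne p 0 with rfl | hp0
  · simp
  rcases eq_or_ne q 0 with rfl | hq0
  · simp
  rw [zdeg_eq_natDegree (mul_ne_zero hp0 hq0), natDegree_mul hp0 hq0]
  rw [zdeg_eq_natDegree hp0, WithBot.coe_le_coe] at hp
  rw [zdeg_eq_natDegree hq0, WithBot.coe_le_coe] at hq
  exact_mod_cast (by omega : ((p.natDegree + q.natDegree : ℕ) : ℤ) ≤ a + b)

lemma coeffZ_mul_of_zdeg_le (hp : zdeg p ≤ a) (hq : zdeg q ≤ b) :
    coeffZ (a + b) (p * q) = coeffZ a p * coeffZ b q := by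
  rcases lt_or_ge a 0 with ha | ha
  · simp [eq_zero_of_zdeg_le_of_neg hp ha]
  rcases lt_or_ge b 0 with hb | hb
  · simp [eq_zero_of_zdeg_le_of_neg hq hb]
  rw [coeffZ_of_nonneg (add_nonneg ha hb), coeffZ_of_nonneg ha, coeffZ_of_nonneg hb,
    Int.toNat_add ha hb, coeff_mul_add_eq_of_natDegree_le
      (natDegree_le_toNat_of_zdeg_le hp) (natDegree_le_toNat_of_zdeg_le hq)]

variable {ι : Type*} {t : Finset ι} {f : ι → K[X]} {d : ι → ℤ}

lemma zdeg_prod_le (h : ∀ i ∈ t, zdeg (f i) ≤ d i) :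
    zdeg (∏ i ∈ t, f i) ≤ ((∑ i ∈ t, d i : ℤ) : WithBot ℤ) := by
  classical
  induction t using Finset.induction_on with
  | empty => simp [zdeg]
  | insert a t ha ih =>
    rw [Finset.prod_insert ha, Finset.sum_insert ha]
    exact zdeg_mul_le (h a (by simp)) (ih fun i hi => h i (by simp [hi]))

lemma coeffZ_prod_of_zdeg_le (h : ∀ i ∈ t, zdeg (f i) ≤ d i) :
    coeffZ (∑ i ∈ t, d i) (∏ i ∈ t, f i) = ∏ i ∈ t, coeffZ (d i) (f i) := by
  classical
  induction t using Finset.induction_on with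
  | empty => simp [coeffZ_of_nonneg]
  | insert a t ha ih =>
    have ht : ∀ i ∈ t, zdeg (f i) ≤ d i := fun i hi => h i (by simp [hi])
    rw [Finset.prod_insert ha, Finset.sum_insert ha, Finset.prod_insert ha,
      coeffZ_mul_of_zdeg_le (h a (by simp)) (zdeg_prod_le ht), ih ht]

lemma zdeg_sum_le (h : ∀ i ∈ t, zdeg (f i) ≤ e) : zdeg (∑ i ∈ t, f i) ≤ e :=
  zdeg_le_iff_coeff_eq_zero.mpr fun m hm => by
    rw [finsetSum_coeff]
    exact Finset.sum_eq_zero fun i hi => zdeg_le_iff_coeff_eq_zero.mp (h i hi) m hm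

lemma zdeg_zsmul_le (n : ℤ) (h : zdeg p ≤ e) : zdeg (n • p) ≤ e :=
  zdeg_le_iff_coeff_eq_zero.mpr fun m hm => by
    rw [coeff_smul, zdeg_le_iff_coeff_eq_zero.mp h m hm, smul_zero]

end zdeg

section sdeg

variable {K : Type*} [Field K]

lemma WithBot.add_coe_le_coe_iff {x : WithBot ℤ} {a b : ℤ} :
    x + (a : WithBot ℤ) ≤ b ↔ x ≤ ((b - a : ℤ) : WithBot ℤ) := by
  induction x using WithBot.recBotCoe with
  | bot => simp
  | coe x => norm_cast; omega

lemma sdeg_le_iff {m : ℕ} {s : Fin m → ℤ} {w : Fin m → K[X]} {d : ℤ} :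
    sdeg s w ≤ d ↔ ∀ j, zdeg (w j) ≤ ((d - s j : ℤ) : WithBot ℤ) := by
  simp [sdeg, Finset.sup_le_iff, WithBot.add_coe_le_coe_iff]

lemma sdeg_eq_of_coeffZ_ne_zero {m : ℕ} {s : Fin m → ℤ} {w : Fin m → K[X]} {d : ℤ}
    (h : sdeg s w ≤ d) {j : Fin m} (hj : coeffZ (d - s j) (w j) ≠ 0) : sdeg s w = d := by
  refine le_antisymm h ?_
  calc (d : WithBot ℤ) = ((d - s j : ℤ) : WithBot ℤ) + (s j : WithBot ℤ) := by
        rw [← WithBot.coe_add, sub_add_cancel]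
    _ ≤ zdeg (w j) + (s j : WithBot ℤ) := by gcongr; exact le_zdeg_of_coeffZ_ne_zero hj
    _ ≤ sdeg s w :=
        Finset.le_sup (f := fun j => zdeg (w j) + (s j : WithBot ℤ)) (Finset.mem_univ j)

lemma sLeadingMatrix_apply {n m : ℕ} (s : Fin m → ℤ) (A : Matrix (Fin n) (Fin m) K[X])
    (ds : Fin n → ℤ) (i : Fin n) (j : Fin m) :
    sLeadingMatrix s A ds i j = coeffZ (ds i - s j) (A i j) :=
  coeffZ_eq_ite.symm

variable {n : ℕ} {s ds : Fin n → ℤ} {P : Matrix (Fin n) (Fin n) K[X]}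

lemma sdeg_eq_of_det_sLeadingMatrix_ne_zero (h : ∀ k, sdeg s (P k) ≤ ds k)
    (hL : (sLeadingMatrix s P ds).det ≠ 0) (i : Fin n) : sdeg s (P i) = ds i := by
  obtain ⟨j, hj⟩ : ∃ j, sLeadingMatrix s P ds i j ≠ 0 := by
    by_contra! hrow
    exact hL (det_eq_zero_of_row_eq_zero i hrow)
  rw [sLeadingMatrix_apply] at hj
  exact sdeg_eq_of_coeffZ_ne_zero (h i) hj

lemma sum_sub_sum_eq_sum_perm (σ : Equiv.Perm (Fin n)) (s ds : Fin n → ℤ) :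
    ∑ k, ds k - ∑ l, s l = ∑ l, (ds (σ l) - s l) := by
  rw [Finset.sum_sub_distrib, Equiv.sum_comp σ ds]

lemma zdeg_det_le_of_sdeg_le (h : ∀ k, sdeg s (P k) ≤ ds k) :
    zdeg P.det ≤ ((∑ k, ds k - ∑ l, s l : ℤ) : WithBot ℤ) := by
  rw [det_apply]
  refine zdeg_sum_le fun σ _ => zdeg_zsmul_le _ ?_
  rw [sum_sub_sum_eq_sum_perm σ]
  exact zdeg_prod_le fun l _ => sdeg_le_iff.mp (h (σ l)) l

lemma coeffZ_det_of_sdeg_le (h : ∀ k, sdeg s (P k) ≤ ds k) :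
    coeffZ (∑ k, ds k - ∑ l, s l) P.det = (sLeadingMatrix s P ds).det := by
  simp only [det_apply, map_sum, Units.smul_def, map_zsmul]
  refine Finset.sum_congr rfl fun σ _ => ?_
  rw [sum_sub_sum_eq_sum_perm σ, coeffZ_prod_of_zdeg_le fun l _ => sdeg_le_iff.mp (h (σ l)) l]
  simp only [sLeadingMatrix_apply]

end sdeg

lemma Matrix.adjugate_transpose_apply {R ι : Type*} [CommRing R] [Fintype ι] [DecidableEq ι]
    (A : Matrix ι ι R) (i j : ι) : A.adjugateᵀ i j = (A.updateRow i (Pi.single j 1)).det :=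
  adjugate_apply A j i

section adjugate

variable {K : Type*} [Field K] {n : ℕ} {s η : Fin n → ℤ} {A : Matrix (Fin n) (Fin n) K[X]}

lemma sdeg_single_one_le (s : Fin n → ℤ) (j : Fin n) :
    sdeg s (Pi.single j (1 : K[X])) ≤ s j := by
  refine sdeg_le_iff.mpr fun l => ?_
  rcases eq_or_ne l j with rfl | hl
  · simp [zdeg]
  · simp [hl]

lemma sdeg_updateRow_single_le (h : ∀ k, sdeg s (A k) ≤ η k) (i j k : Fin n) :
    sdeg s (A.updateRow i (Pi.single j 1) k) ≤ Function.update η i (s j) k := by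
  rcases eq_or_ne k i with rfl | hk
  · simpa using sdeg_single_one_le s j
  · simpa [hk] using h k

lemma sLeadingMatrix_updateRow_single (i j : Fin n) :
    sLeadingMatrix s (A.updateRow i (Pi.single j 1)) (Function.update η i (s j)) =
      (sLeadingMatrix s A η).updateRow i (Pi.single j 1) := by
  ext k l
  rcases eq_or_ne k i with rfl | hk
  · rcases eq_or_ne l j with rfl | hl
    · simp [sLeadingMatrix_apply, coeffZ_of_nonneg]
    · simp [sLeadingMatrix_apply, hl]
  · simp [sLeadingMatrix_apply, hk]

lemma sum_update_sub_sum (i j : Fin n) :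
    ∑ k, Function.update η i (s j) k - ∑ l, s l = ∑ k, η k - ∑ l, s l - η i + s j := by
  rw [Finset.sum_update_of_mem (Finset.mem_univ i), Finset.sdiff_singleton_eq_erase,
    ← Finset.add_sum_erase _ η (Finset.mem_univ i)]
  ring

lemma zdeg_adjugate_transpose_le (h : ∀ k, sdeg s (A k) ≤ η k) (i j : Fin n) :
    zdeg (A.adjugateᵀ i j) ≤ ((∑ k, η k - ∑ l, s l - η i + s j : ℤ) : WithBot ℤ) := by
  rw [adjugate_transpose_apply, ← sum_update_sub_sum]
  exact zdeg_det_le_of_sdeg_le (sdeg_updateRow_single_le h i j)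

lemma coeffZ_adjugate_transpose (h : ∀ k, sdeg s (A k) ≤ η k) (i j : Fin n) :
    coeffZ (∑ k, η k - ∑ l, s l - η i + s j) (A.adjugateᵀ i j) =
      (sLeadingMatrix s A η).adjugateᵀ i j := by
  rw [adjugate_transpose_apply, adjugate_transpose_apply, ← sum_update_sub_sum,
    coeffZ_det_of_sdeg_le (sdeg_updateRow_single_le h i j), sLeadingMatrix_updateRow_single]

lemma sdeg_adjugate_transpose_le (h : ∀ k, sdeg s (A k) ≤ η k) (i : Fin n) :
    sdeg (fun j => -s j) (A.adjugateᵀ i) ≤ ((∑ k, η k - ∑ l, s l - η i : ℤ) : WithBot ℤ) :=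
  sdeg_le_iff.mpr fun j => by
    simpa only [sub_neg_eq_add] using zdeg_adjugate_transpose_le h i j

lemma sLeadingMatrix_adjugate_transpose (h : ∀ k, sdeg s (A k) ≤ η k) :
    sLeadingMatrix (fun j => -s j) A.adjugateᵀ (fun i => ∑ k, η k - ∑ l, s l - η i) =
      (sLeadingMatrix s A η).adjugateᵀ := by
  ext i j
  rw [sLeadingMatrix_apply, sub_neg_eq_add, coeffZ_adjugate_transpose h]

end adjugate

theorem stmt15_general {K : Type*} [Field K] {n : ℕ} (s : Fin n → ℤ)
    (A : Matrix (Fin n) (Fin n) K[X])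
    (η : Fin n → ℤ) (hη : ∀ i, (η i : WithBot ℤ) = sdeg s (A i))
    (hred : (sLeadingMatrix s A η).det ≠ 0) :
    (∀ i, (((∑ j, η j) - (∑ j, s j) - η i : ℤ) : WithBot ℤ) =
        sdeg (fun j => -s j) ((A.adjugate)ᵀ i)) ∧
    (sLeadingMatrix (fun j => -s j) (A.adjugate)ᵀ
        (fun i => (∑ j, η j) - (∑ j, s j) - η i)).det ≠ 0 := by
  have hrow : ∀ k, sdeg s (A k) ≤ η k := fun k => (hη k).ge
  have hdet : (sLeadingMatrix (fun j => -s j) A.adjugateᵀ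
      (fun i => ∑ j, η j - ∑ j, s j - η i)).det ≠ 0 := by
    rw [sLeadingMatrix_adjugate_transpose hrow, det_transpose, det_adjugate]
    exact pow_ne_zero _ hred
  exact ⟨fun i => (sdeg_eq_of_det_sLeadingMatrix_ne_zero
    (sdeg_adjugate_transpose_le hrow) hdet i).symm, hdet⟩

/-- If `A` is an `s`-row reduced nonsingular matrix with `s`-row degrees `η`, then
`adj(A)ᵀ` is `(-s)`-row reduced, and its `i`-th `(-s)`-row degree is `η - s - η_i`
where `η = Σ η_j` and `s = Σ s_j`. -/
theorem stmt15 {K : Type*} [Field K] {n : ℕ} (s : Fin n → ℤ)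
    (A : Matrix (Fin n) (Fin n) K[X]) (hA : A.det ≠ 0)
    (η : Fin n → ℤ) (hη : ∀ i, (η i : WithBot ℤ) = sdeg s (A i))
    (hred : (sLeadingMatrix s A η).det ≠ 0) :
    (∀ i, (((∑ j, η j) - (∑ j, s j) - η i : ℤ) : WithBot ℤ) =
        sdeg (fun j => -s j) ((A.adjugate)ᵀ i)) ∧
    (sLeadingMatrix (fun j => -s j) (A.adjugate)ᵀ
        (fun i => (∑ j, η j) - (∑ j, s j) - η i)).det ≠ 0 :=
  stmt15_general s A η hη hred

end
end
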